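/- arXiv:2401.01840 — 2 statements merged into one kernel-verified Lean document; each statement's English description precedes it below -/
import Mathlib

section
/- Let m > 2, σ > 0, and θ_m = (1/(2σ))^{1/(m-2)}. The convex hull (convex envelope) of h_m on [0,∞) is given by h_m^{**}(ρ) = 0 for ρ ∈ [0, θ_m] and h_m^{**}(ρ) = h_m(ρ) for ρ ≥ θ_m. -/
/-!
With `c = 1/(2σ) = θ^(m-2)`, the function `h_m` vanishes at `0` and `θ`, is nonnegative on
`[0, ∞)` by weighted AM-GM, and is convex on `[θ, ∞)` since `h_m'' ρ = m ρ^(m-2) - 2c ≥ 0` there.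
Being convex with its minimum at `θ`, it is nondecreasing on `[θ, ∞)`, so gluing the zero function
on `(-∞, θ]` to it gives a convex minorant. Conversely a convex minorant `g` satisfies
`g 0 ≤ 0` and `g θ ≤ 0`, hence `g ≤ 0` on `[0, θ]`, and `g ≤ h_m` elsewhere.
-/

open Real Set

section

variable {𝕜 β : Type*} [Field 𝕜] [LinearOrder 𝕜] [IsStrictOrderedRing 𝕜]
  [AddCommMonoid β] [LinearOrder β] [IsOrderedCancelAddMonoid β] [Module 𝕜 β]
  [PosSMulStrictMono 𝕜 β] {f : 𝕜 → β} {a : 𝕜}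

theorem ConvexOn.monotoneOn_Ici_of_isMinOn (hf : ConvexOn 𝕜 (Ici a) f)
    (hmin : IsMinOn f (Ici a) a) : MonotoneOn f (Ici a) := by
  intro x hx y hy hxy
  rcases (mem_Ici.mp hx).eq_or_lt with rfl | hax
  · exact hmin hy
  · exact hf.le_right_of_left_le'' self_mem_Ici hy hax hxy (hmin hx)

end

theorem convexOn_univ_ite_le {f : ℝ → ℝ} {a : ℝ} (hf : ConvexOn ℝ (Ici a) f)
    (hmin : IsMinOn f (Ici a) a) (hfa : f a = 0) :
    ConvexOn ℝ univ (fun x => if x ≤ a then 0 else f x) :=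
  convexOn_univ_piecewise_Iic_of_antitoneOn_Iic_monotoneOn_Ici (convexOn_const 0 (convex_Iic a))
    hf antitoneOn_const (hf.monotoneOn_Ici_of_isMinOn hmin) hfa.symm

/-- The paper's `h_m`, with the coefficient `1/(2σ)` written as `θ ^ (m - 2)`. -/
noncomputable def hₘ (m θ ρ : ℝ) : ℝ :=
  ρ ^ m / (m - 1) - θ ^ (m - 2) * ρ ^ 2 + (m - 2) / (m - 1) * θ ^ (m - 1) * ρ

section

variable {m θ : ℝ}

theorem hₘ_zero (hm : m ≠ 0) : hₘ m θ 0 = 0 := by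
  simp [hₘ, zero_rpow hm]

theorem hₘ_self (hm : 1 < m) (hθ : 0 ≤ θ) : hₘ m θ θ = 0 := by
  have hm1 : m - 1 ≠ 0 := by linarith
  have hpow_m : θ ^ m = θ ^ (m - 2) * θ ^ 2 := by
    rw [← rpow_natCast, ← rpow_add' hθ (by norm_num; linarith)]; norm_num
  have hpow_m1 : θ ^ (m - 1) = θ ^ (m - 2) * θ := by
    rw [← rpow_add_one' hθ (by linarith)]; ring_nf
  rw [hₘ, hpow_m, hpow_m1]
  field_simp
  ring

theorem hₘ_nonneg (hm : 2 ≤ m) (hθ : 0 ≤ θ) {ρ : ℝ} (hρ : 0 ≤ ρ) : 0 ≤ hₘ m θ ρ := by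
  have hm1 : 0 < m - 1 := by linarith
  have amgm : ρ * θ ^ (m - 2) ≤ 1 / (m - 1) * ρ ^ (m - 1) + (m - 2) / (m - 1) * θ ^ (m - 1) := by
    have := geom_mean_le_arith_mean2_weighted (w₁ := 1 / (m - 1)) (w₂ := (m - 2) / (m - 1))
      (by positivity) (div_nonneg (by linarith) hm1.le) (rpow_nonneg hρ (m - 1))
      (rpow_nonneg hθ (m - 1)) (by field_simp; ring)
    rwa [← rpow_mul hρ, ← rpow_mul hθ, mul_one_div_cancel hm1.ne', mul_div_cancel₀ _ hm1.ne',
      rpow_one] at this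
  have hpow_m : ρ ^ m = ρ ^ (m - 1) * ρ := by
    rw [← rpow_add_one' hρ (by linarith)]; ring_nf
  have : hₘ m θ ρ = ρ * (1 / (m - 1) * ρ ^ (m - 1) + (m - 2) / (m - 1) * θ ^ (m - 1)
      - ρ * θ ^ (m - 2)) := by
    rw [hₘ, hpow_m]; ring
  rw [this]
  exact mul_nonneg hρ (sub_nonneg.mpr amgm)

theorem hasDerivAt_hₘ (hm : 1 ≤ m) (x : ℝ) : HasDerivAt (hₘ m θ)
    (m * x ^ (m - 1) / (m - 1) - θ ^ (m - 2) * (2 * x) + (m - 2) / (m - 1) * θ ^ (m - 1)) x :=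
  ((((hasDerivAt_rpow_const (Or.inr hm)).div_const (m - 1)).sub
    ((hasDerivAt_pow 2 x).const_mul (θ ^ (m - 2)))).add
    ((hasDerivAt_id x).const_mul ((m - 2) / (m - 1) * θ ^ (m - 1)))).congr_deriv (by simp)

theorem convexOn_hₘ (hm : 2 ≤ m) (hθ : 0 ≤ θ) : ConvexOn ℝ (Ici θ) (hₘ m θ) := by
  have hm1 : m - 1 ≠ 0 := by linarith
  have hderiv := hasDerivAt_hₘ (m := m) (θ := θ) (by linarith)
  have hderiv2 (x : ℝ) : HasDerivAt
      (fun x => m * x ^ (m - 1) / (m - 1) - θ ^ (m - 2) * (2 * x) + (m - 2) / (m - 1) * θ ^ (m - 1))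
      (m * x ^ (m - 2) - 2 * θ ^ (m - 2)) x :=
    ((((hasDerivAt_rpow_const (p := m - 1) (Or.inr (by linarith))).const_mul m).div_const
      (m - 1)).sub (((hasDerivAt_id x).const_mul 2).const_mul (θ ^ (m - 2)))).add_const _
      |>.congr_deriv (by rw [show m - 1 - 1 = m - 2 by ring]; field_simp)
  refine convexOn_of_hasDerivWithinAt2_nonneg (convex_Ici θ)
    (fun x _ => (hderiv x).continuousAt.continuousWithinAt)
    (fun x _ => (hderiv x).hasDerivWithinAt) (fun x _ => (hderiv2 x).hasDerivWithinAt) ?_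
  rw [interior_Ici]
  intro x hx
  have hθx : θ ^ (m - 2) ≤ x ^ (m - 2) := rpow_le_rpow hθ (le_of_lt hx) (by linarith)
  have : 0 ≤ θ ^ (m - 2) := rpow_nonneg hθ _
  nlinarith

end

theorem stmt_2 (m σ : ℝ) (hm : 2 < m) (hσ : 0 < σ)
    (θ : ℝ) (hθ : θ = (1 / (2 * σ)) ^ (1 / (m - 2)))
    (h : ℝ → ℝ)
    (hdef : ∀ ρ : ℝ, h ρ = ρ ^ m / (m - 1) - (1 / (2 * σ)) * ρ ^ 2
        + ((m - 2) / (m - 1)) * θ ^ (m - 1) * ρ)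
    (hstar : ℝ → ℝ)
    (hstardef : ∀ ρ : ℝ, hstar ρ = if ρ ≤ θ then 0 else h ρ) :
    ConvexOn ℝ (Ici (0 : ℝ)) hstar ∧
    (∀ ρ ∈ Ici (0 : ℝ), hstar ρ ≤ h ρ) ∧
    (∀ g : ℝ → ℝ, ConvexOn ℝ (Ici (0 : ℝ)) g → (∀ ρ ∈ Ici (0 : ℝ), g ρ ≤ h ρ) →
      ∀ ρ ∈ Ici (0 : ℝ), g ρ ≤ hstar ρ) := by
  have hc : 0 < 1 / (2 * σ) := by positivity
  have hθ0 : 0 ≤ θ := hθ ▸ rpow_nonneg hc.le _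
  have hθ_pow : θ ^ (m - 2) = 1 / (2 * σ) := by
    rw [hθ, ← rpow_mul hc.le, one_div_mul_cancel (by linarith), rpow_one]
  obtain rfl : h = hₘ m θ := funext fun ρ => by rw [hdef, hₘ, hθ_pow]
  obtain rfl : hstar = fun ρ => if ρ ≤ θ then 0 else hₘ m θ ρ := funext hstardef
  have hconv := convexOn_hₘ hm.le hθ0
  have hmin : IsMinOn (hₘ m θ) (Ici θ) θ := isMinOn_iff.mpr fun ρ hρ => by
    rw [hₘ_self (by linarith) hθ0]
    exact hₘ_nonneg hm.le hθ0 (hθ0.trans hρ)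
  refine ⟨(convexOn_univ_ite_le hconv hmin (hₘ_self (by linarith) hθ0)).subset (subset_univ _)
    (convex_Ici 0), fun ρ hρ => ?_, fun g hg hgh ρ hρ => ?_⟩
  · dsimp only
    split_ifs
    exacts [hₘ_nonneg hm.le hθ0 hρ, le_rfl]
  · dsimp only
    split_ifs with hρθ
    · have hg0 : g 0 ≤ 0 := (hgh 0 self_mem_Ici).trans_eq (hₘ_zero (by linarith))
      have hgθ : g θ ≤ 0 := (hgh θ hθ0).trans_eq (hₘ_self (by linarith) hθ0)
      have hseg : ρ ∈ segment ℝ 0 θ := by rw [segment_eq_Icc hθ0]; exact ⟨hρ, hρθ⟩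
      exact (hg.le_on_segment self_mem_Ici hθ0 hseg).trans (max_le hg0 hgθ)
    · exact hgh ρ hρ
end

section
/- Let G be nonnegative, even, integrable on ℝ^d with ∫G = 1/σ, G_ε(x) = ε^{-d}G(x/ε), and for ρ ∈ L¹∩L² set φ_ε = G_ε * ρ. Then (1/2)∫∫ G_ε(x−y)(ρ(x)−ρ(y))² dx dy = σ ∫ (ρ/σ − φ_ε)² dx + ∫ φ_ε (ρ − σ φ_ε) dx. Moreover, if additionally σ φ_ε − ε² Δφ_ε = ρ (i.e., G solves σG − Δ G = δ₀ suitably scaled), then ∫ φ_ε(ρ − σ φ_ε) dx = ε² ∫ |∇φ_ε|² dx, so (1/2)∫∫ G_ε(x−y)(ρ(x)−ρ(y))² dx dy = σ ∫ (ρ/σ − φ_ε)² dx + ε² ∫ |∇φ_ε|² dx. -/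
/-!
Expanding the square and using that `G_ε` is even, the double integral equals
`2 (‖ρ‖₂² / σ - ∫ ρ φ_ε)`, since `∫ G_ε = ∫ G = 1 / σ`; expanding the right-hand side gives the
same quantity. For the second identity, multiply the equation `σ φ_ε - ε² Δ φ_ε = ρ` by `φ_ε` and
integrate by parts, `∫ φ Δφ = -∫ |∇φ|²`. With only `φ Δφ` integrable (not each `φ ∂ᵢ²φ`), this is
the divergence theorem on the whole space for the integrable field `φ ∇φ`.
-/

open MeasureTheory Filter Topology Module InnerProductSpace Laplacian

section Kernel

variable {E : Type*} [AddGroup E] [MeasurableSpace E] [MeasurableAdd₂ E] [MeasurableNeg E]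
  {μ : Measure E} [SFinite μ] [μ.IsAddRightInvariant] {K : E → ℝ}

theorem integrable_kernel_sub_mul_snd (hK : Integrable K μ) {g : E → ℝ} (hg : Integrable g μ) :
    Integrable (fun p : E × E => K (p.1 - p.2) * g p.2) (μ.prod μ) := by
  simpa [mul_comm] using hg.convolution_integrand (ContinuousLinearMap.mul ℝ ℝ) hK (μ := μ)

theorem integral_kernel_sub_mul_snd (hK : Integrable K μ) {g : E → ℝ} (hg : Integrable g μ) :
    ∫ p : E × E, K (p.1 - p.2) * g p.2 ∂(μ.prod μ) = (∫ x, K x ∂μ) * ∫ x, g x ∂μ := by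
  rw [integral_prod_symm _ (integrable_kernel_sub_mul_snd hK hg)]
  simp_rw [integral_mul_const, integral_sub_right_eq_self (K ·) (μ := μ)]
  exact integral_const_mul _ _

theorem integral_kernel_mul_sub_sq (hK : Integrable K μ) (hKeven : ∀ x, K (-x) = K x)
    {ρ : E → ℝ} (hρ : Integrable (fun x => ρ x ^ 2) μ)
    (h : Integrable (fun p : E × E => K (p.1 - p.2) * (ρ p.1 - ρ p.2) ^ 2) (μ.prod μ)) :
    ∫ p : E × E, K (p.1 - p.2) * (ρ p.1 - ρ p.2) ^ 2 ∂(μ.prod μ)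
      = 2 * ((∫ x, K x ∂μ) * (∫ x, ρ x ^ 2 ∂μ) - ∫ x, ρ x * ∫ y, K (x - y) * ρ y ∂μ ∂μ) := by
  have hswap : ∀ p : E × E, K (p.2 - p.1) = K (p.1 - p.2) := fun p => by
    rw [← neg_sub, hKeven]
  have hA := integrable_kernel_sub_mul_snd hK hρ
  have hB : Integrable (fun p : E × E => K (p.1 - p.2) * ρ p.1 ^ 2) (μ.prod μ) := by
    simpa [Function.comp_def, hswap] using hA.swap
  have hBA : ∫ p : E × E, K (p.1 - p.2) * ρ p.1 ^ 2 ∂(μ.prod μ)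
      = ∫ p : E × E, K (p.1 - p.2) * ρ p.2 ^ 2 ∂(μ.prod μ) := by
    simpa [hswap] using integral_prod_swap (μ := μ) (ν := μ) fun p => K (p.1 - p.2) * ρ p.2 ^ 2
  -- polarization, so that no measurability of `ρ` is needed
  have hC : Integrable (fun p : E × E => K (p.1 - p.2) * (ρ p.1 * ρ p.2)) (μ.prod μ) := by
    refine ((hB.add hA).sub h).div_const 2 |>.congr (ae_of_all _ fun p => ?_)
    simp only [Pi.add_apply, Pi.sub_apply]
    ring
  have hCval : ∫ p : E × E, K (p.1 - p.2) * (ρ p.1 * ρ p.2) ∂(μ.prod μ)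
      = ∫ x, ρ x * ∫ y, K (x - y) * ρ y ∂μ ∂μ := by
    rw [integral_prod _ hC]
    simp_rw [← integral_const_mul, mul_left_comm (ρ _)]
  have hsplit : (fun p : E × E => K (p.1 - p.2) * (ρ p.1 - ρ p.2) ^ 2)
      = fun p => K (p.1 - p.2) * ρ p.1 ^ 2 + K (p.1 - p.2) * ρ p.2 ^ 2
        - 2 * (K (p.1 - p.2) * (ρ p.1 * ρ p.2)) := by
    ext p; ring
  have hBA' : Integrable (fun p : E × E => K (p.1 - p.2) * ρ p.1 ^ 2
      + K (p.1 - p.2) * ρ p.2 ^ 2) (μ.prod μ) := hB.add hA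
  rw [hsplit, integral_sub hBA' (hC.const_mul 2), integral_add hB hA, integral_const_mul,
    hBA, hCval, integral_kernel_sub_mul_snd hK hρ]
  ring

end Kernel

theorem integral_rpow_neg_finrank_mul_comp_inv_smul {E : Type*} [NormedAddCommGroup E]
    [NormedSpace ℝ E] [FiniteDimensional ℝ E] [MeasurableSpace E] [BorelSpace E]
    {μ : Measure E} [μ.IsAddHaarMeasure] (G : E → ℝ) {ε : ℝ} (hε : 0 < ε) :
    ∫ x, ε ^ (-(finrank ℝ E : ℝ)) * G (ε⁻¹ • x) ∂μ = ∫ x, G x ∂μ := by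
  rw [integral_const_mul, Measure.integral_comp_inv_smul, smul_eq_mul,
    abs_of_nonneg (by positivity), Real.rpow_neg hε.le, Real.rpow_natCast,
    inv_mul_cancel_left₀ (by positivity)]

section Quadratic

variable {α : Type*} [MeasurableSpace α] {μ : Measure α} {σ : ℝ} {ρ φ : α → ℝ}

theorem integrable_sq_of_integrable_div_sub_sq (hσ : σ ≠ 0)
    (hρ : Integrable (fun x => ρ x ^ 2) μ) (h₁ : Integrable (fun x => (ρ x / σ - φ x) ^ 2) μ)
    (h₂ : Integrable (fun x => φ x * (ρ x - σ * φ x)) μ) :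
    Integrable (fun x => φ x ^ 2) μ := by
  refine ((hρ.div_const (σ ^ 2)).sub (h₂.const_mul (2 / σ)) |>.sub h₁).congr
    (ae_of_all _ fun x => ?_)
  simp only [Pi.sub_apply]
  field_simp
  ring

theorem mul_integral_div_sub_sq_add_integral (hσ : σ ≠ 0)
    (hρ : Integrable (fun x => ρ x ^ 2) μ) (h₁ : Integrable (fun x => (ρ x / σ - φ x) ^ 2) μ)
    (h₂ : Integrable (fun x => φ x * (ρ x - σ * φ x)) μ) :
    σ * ∫ x, (ρ x / σ - φ x) ^ 2 ∂μ + ∫ x, φ x * (ρ x - σ * φ x) ∂μ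
      = (∫ x, ρ x ^ 2 ∂μ) / σ - ∫ x, ρ x * φ x ∂μ := by
  have hρφ : Integrable (fun x => ρ x * φ x) μ := by
    refine ((hρ.div_const σ).sub (h₁.const_mul σ) |>.sub h₂).congr (ae_of_all _ fun x => ?_)
    simp only [Pi.sub_apply]
    field_simp
    ring
  rw [← integral_const_mul, ← integral_add (h₁.const_mul σ) h₂, ← integral_div,
    ← integral_sub (hρ.div_const σ) hρφ]
  congr 1 with x
  field_simp
  ring

end Quadratic

section Divergence

variable {E ι : Type*} [NormedAddCommGroup E] [NormedSpace ℝ E] [FiniteDimensional ℝ E]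
  [MeasurableSpace E] [BorelSpace E] {μ : Measure E} [μ.IsAddHaarMeasure] [Fintype ι]

theorem integral_mul_sum_fderiv_eq_neg_sum {χ : E → ℝ} (hχ : ContDiff ℝ 1 χ)
    (hχc : HasCompactSupport χ) {f : ι → E → ℝ} (v : ι → E) (hf : ∀ i, ContDiff ℝ 1 (f i))
    (hfi : ∀ i, Integrable (f i) μ) :
    ∫ x, χ x * ∑ i, fderiv ℝ (f i) x (v i) ∂μ = -∑ i, ∫ x, fderiv ℝ χ x (v i) * f i x ∂μ := by
  obtain ⟨M, hM⟩ := hχ.continuous.bounded_above_of_compact_support hχc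
  obtain ⟨M', hM'⟩ :=
    (hχ.continuous_fderiv one_ne_zero).bounded_above_of_compact_support (hχc.fderiv ℝ)
  have hχ'cont : ∀ i, Continuous fun x => fderiv ℝ χ x (v i) := fun i =>
    (hχ.continuous_fderiv one_ne_zero).clm_apply continuous_const
  have hχ'int : ∀ i, Integrable (fun x => fderiv ℝ χ x (v i) * f i x) μ := fun i =>
    (hfi i).bdd_mul (hχ'cont i).aestronglyMeasurable
      (ae_of_all _ fun x => (ContinuousLinearMap.le_opNorm _ _).trans
        (mul_le_mul_of_nonneg_right (hM' x) (norm_nonneg _)))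
  have hχfint : ∀ i, Integrable (fun x => χ x * f i x) μ := fun i =>
    (hfi i).bdd_mul hχ.continuous.aestronglyMeasurable (ae_of_all _ hM)
  have hχf'int : ∀ i, Integrable (fun x => χ x * fderiv ℝ (f i) x (v i)) μ := fun i =>
    (hχ.continuous.mul (((hf i).continuous_fderiv one_ne_zero).clm_apply
      continuous_const)).integrable_of_hasCompactSupport hχc.mul_right
  simp_rw [Finset.mul_sum]
  rw [integral_finsetSum _ fun i _ => hχf'int i, ← Finset.sum_neg_distrib]
  exact Finset.sum_congr rfl fun i _ => integral_mul_fderiv_eq_neg_fderiv_mul_of_integrable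
    (hχ'int i) (hχf'int i) (hχfint i) (fun x _ => hχ.differentiable one_ne_zero x)
    (fun x _ => (hf i).differentiable one_ne_zero x)

/-- Test against the cutoffs `χ (c • x)`: for `c ≠ 0`, integration by parts moves the derivative
onto the cutoff, which produces a factor `c`; both sides are continuous in `c` by dominated
convergence, and at `c = 0` they read `∫ div f` and `0`. -/
theorem integral_sum_fderiv_eq_zero {f : ι → E → ℝ} (v : ι → E) (hf : ∀ i, ContDiff ℝ 1 (f i))
    (hfi : ∀ i, Integrable (f i) μ) (hdiv : Integrable (fun x => ∑ i, fderiv ℝ (f i) x (v i)) μ) :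
    ∫ x, ∑ i, fderiv ℝ (f i) x (v i) ∂μ = 0 := by
  set D := fun x => ∑ i, fderiv ℝ (f i) x (v i)
  let b : ContDiffBump (0 : E) := ⟨1, 2, one_pos, one_lt_two⟩
  have hχ : ContDiff ℝ 1 b := b.contDiff
  obtain ⟨M, hM⟩ := hχ.continuous.bounded_above_of_compact_support b.hasCompactSupport
  obtain ⟨M', hM'⟩ := (hχ.continuous_fderiv one_ne_zero).bounded_above_of_compact_support
    (b.hasCompactSupport.fderiv ℝ)
  set F : ℝ → ℝ := fun c => ∫ x, b (c • x) * D x ∂μ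
  set H : ℝ → ℝ := fun c => -∑ i, ∫ x, c * fderiv ℝ b (c • x) (v i) * f i x ∂μ
  have hFH : ∀ c ≠ (0 : ℝ), F c = H c := by
    intro c hc
    have := integral_mul_sum_fderiv_eq_neg_sum (μ := μ) (χ := fun x => b (c • x))
      (hχ.comp (contDiff_const_smul c)) (b.hasCompactSupport.comp_smul hc) v hf hfi
    simpa [F, H, D, fderiv_comp_smul, mul_assoc] using this
  have hF : ContinuousAt F 0 := by
    refine continuousAt_of_dominated (bound := fun x => M * ‖D x‖)
      (Eventually.of_forall fun c => ?_) (Eventually.of_forall fun c => ae_of_all _ fun x => ?_)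
      (hdiv.norm.const_mul M)
      (ae_of_all _ fun x => ((hχ.continuous.comp (continuous_id.smul continuous_const)).mul
        continuous_const).continuousAt)
    · exact (hχ.continuous.comp (continuous_const_smul c)).aestronglyMeasurable.mul
        hdiv.aestronglyMeasurable
    · rw [norm_mul]; exact mul_le_mul_of_nonneg_right (hM _) (norm_nonneg _)
  have hH : ContinuousAt H 0 := by
    refine (tendsto_finsetSum _ fun i _ => ?_).neg
    have hc1 : ∀ᶠ c : ℝ in 𝓝 0, ‖c‖ ≤ 1 :=
      eventually_norm_sub_lt (0 : ℝ) one_pos |>.mono fun c hc => by simpa using hc.le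
    refine continuousAt_of_dominated (bound := fun x => M' * ‖v i‖ * ‖f i x‖)
      (Eventually.of_forall fun c => ?_) (hc1.mono fun c hc => ae_of_all _ fun x => ?_)
      ((hfi i).norm.const_mul _) (ae_of_all _ fun x => ?_)
    · exact ((continuous_const.mul (((hχ.continuous_fderiv one_ne_zero).comp
        (continuous_const_smul c)).clm_apply continuous_const)).aestronglyMeasurable.mul
        (hfi i).aestronglyMeasurable)
    · have hM'v : ‖fderiv ℝ b (c • x) (v i)‖ ≤ M' * ‖v i‖ :=
        (ContinuousLinearMap.le_opNorm _ _).trans (by gcongr; exact hM' _)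
      calc ‖c * fderiv ℝ b (c • x) (v i) * f i x‖
          = ‖c‖ * ‖fderiv ℝ b (c • x) (v i)‖ * ‖f i x‖ := by rw [norm_mul, norm_mul]
        _ ≤ 1 * (M' * ‖v i‖) * ‖f i x‖ := by gcongr
        _ = M' * ‖v i‖ * ‖f i x‖ := by rw [one_mul]
    · exact ((continuous_id.mul (((hχ.continuous_fderiv one_ne_zero).comp
        (continuous_id.smul continuous_const)).clm_apply continuous_const)).mul
        continuous_const).continuousAt
  have hFH' : F =ᶠ[𝓝[≠] 0] H := eventually_nhdsWithin_of_forall hFH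
  have h0 : F 0 = H 0 := tendsto_nhds_unique (l := 𝓝[≠] (0 : ℝ))
    (hF.tendsto.mono_left nhdsWithin_le_nhds)
    ((hH.tendsto.mono_left nhdsWithin_le_nhds).congr' hFH'.symm)
  have hb0 : b 0 = 1 := b.one_of_mem_closedBall (Metric.mem_closedBall_self zero_le_one)
  simpa [F, H, hb0] using h0

end Divergence

theorem fderiv_mul_fderiv_apply_self {E : Type*} [NormedAddCommGroup E] [NormedSpace ℝ E]
    {φ : E → ℝ} (hφ : ContDiff ℝ 2 φ) (v x : E) :
    fderiv ℝ (fun y => φ y * fderiv ℝ φ y v) x v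
      = fderiv ℝ φ x v ^ 2 + φ x * iteratedFDeriv ℝ 2 φ x ![v, v] := by
  have h1 : Differentiable ℝ φ := hφ.differentiable (by norm_num)
  have h2 : Differentiable ℝ (fderiv ℝ φ) :=
    (hφ.fderiv_right (m := 1) (by norm_num)).differentiable one_ne_zero
  have h3 : DifferentiableAt ℝ (fun y => fderiv ℝ φ y v) x :=
    (h2 x).clm_apply (differentiableAt_const v)
  rw [fderiv_fun_mul (h1 x) h3, fderiv_clm_apply (h2 x) (differentiableAt_const v),
    iteratedFDeriv_two_apply]
  simp only [fderiv_fun_const, Pi.zero_apply, ContinuousLinearMap.comp_zero, zero_add,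
    add_apply, smul_apply, ContinuousLinearMap.flip_apply,
    smul_eq_mul, Matrix.cons_val_zero, Matrix.cons_val_one, Matrix.cons_val_fin_one]
  ring

section Gradient

variable {E : Type*} [NormedAddCommGroup E] [InnerProductSpace ℝ E] [FiniteDimensional ℝ E]

theorem norm_gradient_sq_eq_sum {ι : Type*} [Fintype ι] (b : OrthonormalBasis ι ℝ E) (φ : E → ℝ)
    (x : E) : ‖gradient φ x‖ ^ 2 = ∑ i, fderiv ℝ φ x (b i) ^ 2 := by
  rw [← b.norm_dual, gradient, LinearIsometryEquiv.norm_map]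

variable [MeasurableSpace E] [BorelSpace E] {μ : Measure E} [μ.IsAddHaarMeasure]

theorem integral_mul_laplacian_eq_neg_integral_norm_gradient_sq {φ : E → ℝ}
    (hφ : ContDiff ℝ 2 φ) (hφ2 : Integrable (fun x => φ x ^ 2) μ)
    (hgrad : Integrable (fun x => ‖gradient φ x‖ ^ 2) μ)
    (hlap : Integrable (fun x => φ x * Δ φ x) μ) :
    ∫ x, φ x * Δ φ x ∂μ = -∫ x, ‖gradient φ x‖ ^ 2 ∂μ := by
  let b := stdOrthonormalBasis ℝ E
  have hdiv : ∀ x, ∑ i, fderiv ℝ (fun y => φ y * fderiv ℝ φ y (b i)) x (b i)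
      = ‖gradient φ x‖ ^ 2 + φ x * Δ φ x := by
    intro x
    simp only [fderiv_mul_fderiv_apply_self hφ, Finset.sum_add_distrib, ← Finset.mul_sum,
      norm_gradient_sq_eq_sum b, laplacian_eq_iteratedFDeriv_orthonormalBasis φ b]
  have hpartial : ∀ i x, |fderiv ℝ φ x (b i)| ≤ ‖gradient φ x‖ := fun i x => by
    have hb : ‖b i‖ = 1 := b.orthonormal.1 i
    calc |fderiv ℝ φ x (b i)| ≤ ‖fderiv ℝ φ x‖ * ‖b i‖ := (fderiv ℝ φ x).le_opNorm (b i)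
      _ = ‖gradient φ x‖ := by rw [hb, mul_one, gradient, LinearIsometryEquiv.norm_map]
  have hint : ∀ i, Integrable (fun y => φ y * fderiv ℝ φ y (b i)) μ := by
    intro i
    refine ((hφ2.add hgrad).div_const 2).mono' ?_ (ae_of_all _ fun x => ?_)
    · exact (hφ.continuous.mul ((hφ.continuous_fderiv (by norm_num)).clm_apply
        continuous_const)).aestronglyMeasurable
    · calc ‖φ x * fderiv ℝ φ x (b i)‖ = |φ x| * |fderiv ℝ φ x (b i)| := by
            rw [Real.norm_eq_abs, abs_mul]
        _ ≤ |φ x| * ‖gradient φ x‖ := by gcongr; exact hpartial i x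
        _ ≤ (φ x ^ 2 + ‖gradient φ x‖ ^ 2) / 2 := by
            nlinarith [two_mul_le_add_sq |φ x| ‖gradient φ x‖, sq_abs (φ x)]
  have hC1 : ∀ i, ContDiff ℝ 1 (fun y => φ y * fderiv ℝ φ y (b i)) := fun i =>
    (hφ.of_le (by norm_num)).mul ((hφ.fderiv_right (m := 1) (by norm_num)).clm_apply contDiff_const)
  have h0 := integral_sum_fderiv_eq_zero (μ := μ) b hC1 hint
    ((hgrad.add hlap).congr (ae_of_all _ fun x => (hdiv x).symm))
  simp_rw [hdiv] at h0
  rw [integral_add hgrad hlap] at h0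
  linarith

end Gradient

theorem stmt_16_general (d : ℕ) (σ : ℝ) (hσ : 0 < σ) (ε : ℝ) (hε : 0 < ε)
    (G : EuclideanSpace ℝ (Fin d) → ℝ)
    (hGint : Integrable G) (hGeven : ∀ x, G (-x) = G x)
    (hGmass : ∫ x, G x = 1 / σ)
    (Gε : EuclideanSpace ℝ (Fin d) → ℝ)
    (hGε : ∀ x, Gε x = ε ^ (-(d : ℝ)) * G (ε⁻¹ • x))
    (ρ : EuclideanSpace ℝ (Fin d) → ℝ)
    (hρsq : Integrable (fun x => (ρ x) ^ 2))
    (φε : EuclideanSpace ℝ (Fin d) → ℝ)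
    (hφε : ∀ x, φε x = ∫ y, Gε (x - y) * ρ y)
    (hφsm : ContDiff ℝ 2 φε)
    (hint1 : Integrable (fun p : EuclideanSpace ℝ (Fin d) × EuclideanSpace ℝ (Fin d) =>
      Gε (p.1 - p.2) * (ρ p.1 - ρ p.2) ^ 2))
    (hint2 : Integrable (fun x => (ρ x / σ - φε x) ^ 2))
    (hint3 : Integrable (fun x => φε x * (ρ x - σ * φε x)))
    (hint4 : Integrable (fun x => ‖gradient φε x‖ ^ 2)) :
    ((1 / 2 : ℝ) * ∫ p : EuclideanSpace ℝ (Fin d) × EuclideanSpace ℝ (Fin d),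
        Gε (p.1 - p.2) * (ρ p.1 - ρ p.2) ^ 2
      = σ * (∫ x, (ρ x / σ - φε x) ^ 2) + ∫ x, φε x * (ρ x - σ * φε x)) ∧
    ((∀ x, σ * φε x - ε ^ 2 * (∑ i, iteratedFDeriv ℝ 2 φε x
          ![EuclideanSpace.single i 1, EuclideanSpace.single i 1]) = ρ x) →
      (∫ x, φε x * (ρ x - σ * φε x) = ε ^ 2 * ∫ x, ‖gradient φε x‖ ^ 2) ∧
      (1 / 2 : ℝ) * ∫ p : EuclideanSpace ℝ (Fin d) × EuclideanSpace ℝ (Fin d),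
          Gε (p.1 - p.2) * (ρ p.1 - ρ p.2) ^ 2
        = σ * (∫ x, (ρ x / σ - φε x) ^ 2) + ε ^ 2 * ∫ x, ‖gradient φε x‖ ^ 2) := by
  have hGε' : Gε = fun x => ε ^ (-(d : ℝ)) * G (ε⁻¹ • x) := funext hGε
  have hGεint : Integrable Gε := hGε' ▸ (hGint.comp_smul (inv_ne_zero hε.ne')).const_mul _
  have hGεeven : ∀ x, Gε (-x) = Gε x := fun x => by rw [hGε, hGε, smul_neg, hGeven]
  have hGεmass : ∫ x, Gε x = 1 / σ := by
    simpa [hGε', finrank_euclideanSpace_fin, hGmass] using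
      integral_rpow_neg_finrank_mul_comp_inv_smul (μ := volume) G hε
  have part1 : (1 / 2 : ℝ) * ∫ p : EuclideanSpace ℝ (Fin d) × EuclideanSpace ℝ (Fin d),
        Gε (p.1 - p.2) * (ρ p.1 - ρ p.2) ^ 2
      = σ * (∫ x, (ρ x / σ - φε x) ^ 2) + ∫ x, φε x * (ρ x - σ * φε x) := by
    rw [Measure.volume_eq_prod, integral_kernel_mul_sub_sq hGεint hGεeven hρsq hint1, hGεmass,
      mul_integral_div_sub_sq_add_integral hσ.ne' hρsq hint2 hint3]
    simp_rw [← hφε]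
    ring
  refine ⟨part1, fun hPDE => ?_⟩
  have hΔ : ∀ x, φε x * Δ φε x = -(φε x * (ρ x - σ * φε x)) / ε ^ 2 := fun x => by
    rw [laplacian_eq_iteratedFDeriv_orthonormalBasis φε (EuclideanSpace.basisFun (Fin d) ℝ)]
    simp only [EuclideanSpace.basisFun_apply]
    rw [eq_div_iff (by positivity)]
    linear_combination (-φε x) * hPDE x
  have hibp := integral_mul_laplacian_eq_neg_integral_norm_gradient_sq hφsm
    (integrable_sq_of_integrable_div_sub_sq hσ.ne' hρsq hint2 hint3) hint4
    (by simp_rw [hΔ]; exact hint3.neg.div_const _)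
  have part2 : ∫ x, φε x * (ρ x - σ * φε x) = ε ^ 2 * ∫ x, ‖gradient φε x‖ ^ 2 := by
    simp_rw [hΔ, integral_div, integral_neg, neg_div, neg_inj] at hibp
    rw [div_eq_iff (by positivity)] at hibp
    linarith
  exact ⟨part2, part1.trans (by rw [part2])⟩

theorem stmt_16 (d : ℕ) (hd : 1 ≤ d) (σ : ℝ) (hσ : 0 < σ) (ε : ℝ) (hε : 0 < ε)
    (G : EuclideanSpace ℝ (Fin d) → ℝ)
    (hGint : Integrable G) (hGeven : ∀ x, G (-x) = G x) (hGnn : ∀ x, 0 ≤ G x)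
    (hGmass : ∫ x, G x = 1 / σ)
    (Gε : EuclideanSpace ℝ (Fin d) → ℝ)
    (hGε : ∀ x, Gε x = ε ^ (-(d : ℝ)) * G (ε⁻¹ • x))
    (ρ : EuclideanSpace ℝ (Fin d) → ℝ)
    (hρint : Integrable ρ) (hρsq : Integrable (fun x => (ρ x) ^ 2))
    (φε : EuclideanSpace ℝ (Fin d) → ℝ)
    (hφε : ∀ x, φε x = ∫ y, Gε (x - y) * ρ y)
    (hφsm : ContDiff ℝ 2 φε)
    (hint1 : Integrable (fun p : EuclideanSpace ℝ (Fin d) × EuclideanSpace ℝ (Fin d) =>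
      Gε (p.1 - p.2) * (ρ p.1 - ρ p.2) ^ 2))
    (hint2 : Integrable (fun x => (ρ x / σ - φε x) ^ 2))
    (hint3 : Integrable (fun x => φε x * (ρ x - σ * φε x)))
    (hint4 : Integrable (fun x => ‖gradient φε x‖ ^ 2)) :
    ((1 / 2 : ℝ) * ∫ p : EuclideanSpace ℝ (Fin d) × EuclideanSpace ℝ (Fin d),
        Gε (p.1 - p.2) * (ρ p.1 - ρ p.2) ^ 2
      = σ * (∫ x, (ρ x / σ - φε x) ^ 2) + ∫ x, φε x * (ρ x - σ * φε x)) ∧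
    ((∀ x, σ * φε x - ε ^ 2 * (∑ i, iteratedFDeriv ℝ 2 φε x
          ![EuclideanSpace.single i 1, EuclideanSpace.single i 1]) = ρ x) →
      (∫ x, φε x * (ρ x - σ * φε x) = ε ^ 2 * ∫ x, ‖gradient φε x‖ ^ 2) ∧
      (1 / 2 : ℝ) * ∫ p : EuclideanSpace ℝ (Fin d) × EuclideanSpace ℝ (Fin d),
          Gε (p.1 - p.2) * (ρ p.1 - ρ p.2) ^ 2
        = σ * (∫ x, (ρ x / σ - φε x) ^ 2) + ε ^ 2 * ∫ x, ‖gradient φε x‖ ^ 2) :=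
  stmt_16_general d σ hσ ε hε G hGint hGeven hGmass Gε hGε ρ hρsq φε hφε hφsm hint1 hint2 hint3
    hint4
end
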